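/- Fix an integer q ≥ 2. Let H_s be an m×n real matrix with all entries in {0,1}, with exactly c ones per column and d ones per row; let L = H_sᵀ·H_s, λ₁ = cd, and let λ₂ < λ₁ satisfy v·L·vᵀ ≤ λ₂·‖v‖₂² for every v ∈ ℝⁿ with ⟨v, 𝟏⟩ = 0. For each row index j let I_j = { i : (H_s)_{j,i} = 1 }. For each i ∈ {1,…,n}, let f_i(0), …, f_i(q−1) be nonnegative reals with Σ_{k=0}^{q−1} f_i(k) = 1, set x_i = Σ_{k=1}^{q−1} f_i(k), and assume that for every j and every ℓ ∈ I_j, Σ_{i ∈ I_j \ {ℓ}} x_i ≥ x_ℓ. Define S = 2 Σ_{i=1}^{n} ( 1 − Σ_{k=0}^{q−1} f_i(k) cos(2πk/q) ) and V = Σ_{i=1}^{n} ( Σ_{k=0}^{q−1} f_i(k)² + 2 Σ_{0≤k<ℓ≤q−1} f_i(k) f_i(ℓ) cos(2π(k−ℓ)/q) − 2 Σ_{k=0}^{q−1} f_i(k) cos(2πk/q) + 1 ). If V > 0, then S²/V ≥ (1 − cos(2π/q))² · n·(2c − λ₂)/(λ₁ − λ₂). -/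

import Mathlib

/-!
Write `x_i` for the probability that symbol `i` is nonzero. Per symbol, the contribution to `S/2`
is at least `(1 - cos (2π/q)) x_i`, since every nonzero phase has cosine at most `cos (2π/q)`,
and the contribution to `V` is `|∑ₖ f_i(k) ωᵏ - 1|² ≤ (2 x_i)²`. Hence
`S² / V ≥ (1 - cos (2π/q))² (∑ x_i)² / ∑ x_i²`. The check inequalities give `2 x_ℓ ≤ ∑_{i ∈ I_j} x_i`,
so `xᵀ L x = ∑_j (∑_{i ∈ I_j} x_i)² ≥ 2c ∑ x_i²`, while splitting `x` along the all-ones vector,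
an eigenvector of `L` for `cd`, bounds `xᵀ L x ≤ λ₂ (∑ x_i² - (∑ x_i)²/n) + cd (∑ x_i)²/n`.
Comparing the two bounds on `xᵀ L x` bounds `(∑ x_i)² / ∑ x_i²` from below.
-/

open Finset Matrix Real

theorem sum_range_sum_range_of_symm {R : Type*} [CommSemiring R] (N : ℕ) (g : ℕ → ℕ → R)
    (hg : ∀ k l, g k l = g l k) :
    ∑ k ∈ range N, ∑ l ∈ range N, g k l
      = ∑ k ∈ range N, g k k + 2 * ∑ l ∈ range N, ∑ k ∈ range l, g k l := by
  induction N with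
  | zero => simp
  | succ N ih =>
    simp only [sum_range_succ, sum_add_distrib, ih, fun k => hg N k]
    ring

theorem norm_sum_ofReal_mul_exp_sq {ι : Type*} (s : Finset ι) (w θ : ι → ℝ) :
    ‖∑ k ∈ s, (w k : ℂ) * Complex.exp (θ k * Complex.I)‖ ^ 2
      = ∑ k ∈ s, ∑ l ∈ s, w k * w l * Real.cos (θ k - θ l) := by
  rw [Complex.sq_norm, Complex.normSq_apply, Complex.re_sum, Complex.im_sum, sum_mul_sum,
    sum_mul_sum, ← sum_add_distrib]
  refine sum_congr rfl fun k _ => ?_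
  rw [← sum_add_distrib]
  refine sum_congr rfl fun l _ => ?_
  simp only [Complex.re_ofReal_mul, Complex.im_ofReal_mul, Complex.exp_ofReal_mul_I_re,
    Complex.exp_ofReal_mul_I_im, Real.cos_sub]
  ring

theorem cos_two_pi_mul_div_le_of_two_mul_le {q k : ℕ} (hk : 1 ≤ k) (hkq : 2 * k ≤ q) :
    Real.cos (2 * π * k / q) ≤ Real.cos (2 * π / q) := by
  have hq : (0 : ℝ) < q := by exact_mod_cast (by omega : 0 < q)
  have hk : (1 : ℝ) ≤ k := by exact_mod_cast hk
  have hkq : (2 : ℝ) * k ≤ q := by exact_mod_cast hkq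
  apply Real.cos_le_cos_of_nonneg_of_le_pi (by positivity)
  · rw [div_le_iff₀ hq]; nlinarith [Real.pi_pos]
  · rw [div_le_div_iff₀ hq hq]; nlinarith [mul_pos Real.pi_pos hq]

theorem cos_two_pi_mul_div_le {q k : ℕ} (hk : 1 ≤ k) (hkq : k < q) :
    Real.cos (2 * π * k / q) ≤ Real.cos (2 * π / q) := by
  rcases le_or_gt (2 * k) q with h | h
  · exact cos_two_pi_mul_div_le_of_two_mul_le hk h
  · have hq : (q : ℝ) ≠ 0 := by exact_mod_cast (by omega : q ≠ 0)
    have hsymm : Real.cos (2 * π * k / q) = Real.cos (2 * π * (q - k : ℕ) / q) := by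
      rw [Nat.cast_sub hkq.le, ← Real.cos_two_pi_sub]
      congr 1
      field_simp
    rw [hsymm]
    exact cos_two_pi_mul_div_le_of_two_mul_le (by omega) (by omega)

theorem psk_variance_term_eq_norm_sq (q : ℕ) (g : ℕ → ℝ) :
    ∑ k ∈ range q, g k ^ 2
        + 2 * ∑ l ∈ range q, ∑ k ∈ range l, g k * g l * Real.cos (2 * π * ((k : ℝ) - l) / q)
        - 2 * ∑ k ∈ range q, g k * Real.cos (2 * π * k / q) + 1
      = ‖∑ k ∈ range q, (g k : ℂ) * Complex.exp ((2 * π * k / q : ℝ) * Complex.I) - 1‖ ^ 2 := by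
  set z := ∑ k ∈ range q, (g k : ℂ) * Complex.exp ((2 * π * k / q : ℝ) * Complex.I)
  have hz : ‖z‖ ^ 2 = ∑ k ∈ range q, g k ^ 2
      + 2 * ∑ l ∈ range q, ∑ k ∈ range l, g k * g l * Real.cos (2 * π * ((k : ℝ) - l) / q) := by
    rw [norm_sum_ofReal_mul_exp_sq, sum_range_sum_range_of_symm]
    · simp only [sub_self, Real.cos_zero, mul_one, sq, mul_sub, sub_div]
    · intro k l
      rw [mul_comm (g k), ← Real.cos_neg]
      ring_nf
  have hre : z.re = ∑ k ∈ range q, g k * Real.cos (2 * π * k / q) := by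
    simp only [z, Complex.re_sum, Complex.re_ofReal_mul, Complex.exp_ofReal_mul_I_re]
  rw [Complex.sq_norm, Complex.normSq_sub, ← Complex.sq_norm, hz, map_one, map_one,
    mul_one, hre]
  ring

theorem norm_sum_mul_exp_sub_one_le {q : ℕ} {g : ℕ → ℝ} (hg0 : ∀ k < q, 0 ≤ g k)
    (hg1 : ∑ k ∈ range q, g k = 1) :
    ‖∑ k ∈ range q, (g k : ℂ) * Complex.exp ((2 * π * k / q : ℝ) * Complex.I) - 1‖
      ≤ 2 * ∑ k ∈ Ico 1 q, g k := by
  have hq : 0 < q := Nat.pos_of_ne_zero (by rintro rfl; simp at hg1)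
  have hcentre : ∑ k ∈ range q, (g k : ℂ) * Complex.exp ((2 * π * k / q : ℝ) * Complex.I) - 1
      = ∑ k ∈ Ico 1 q, (g k : ℂ) * (Complex.exp ((2 * π * k / q : ℝ) * Complex.I) - 1) := by
    have hsum : ∑ k ∈ range q, (g k : ℂ) = 1 := by exact_mod_cast hg1
    simp only [mul_sub, mul_one, sum_sub_distrib, range_eq_Ico,
      sum_eq_sum_Ico_succ_bot hq] at hsum ⊢
    rw [← hsum]
    simp
  rw [hcentre, mul_sum]
  refine (norm_sum_le _ _).trans (sum_le_sum fun k hk => ?_)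
  have hgk : 0 ≤ g k := hg0 k (mem_Ico.mp hk).2
  rw [norm_mul, Complex.norm_real, Real.norm_of_nonneg hgk, mul_comm]
  gcongr
  calc _ ≤ ‖Complex.exp ((2 * π * k / q : ℝ) * Complex.I)‖ + ‖(1 : ℂ)‖ := norm_sub_le _ _
    _ = 2 := by rw [Complex.norm_exp_ofReal_mul_I, norm_one]; norm_num

theorem psk_variance_term_le {q : ℕ} {g : ℕ → ℝ} (hg0 : ∀ k < q, 0 ≤ g k)
    (hg1 : ∑ k ∈ range q, g k = 1) :
    ∑ k ∈ range q, g k ^ 2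
        + 2 * ∑ l ∈ range q, ∑ k ∈ range l, g k * g l * Real.cos (2 * π * ((k : ℝ) - l) / q)
        - 2 * ∑ k ∈ range q, g k * Real.cos (2 * π * k / q) + 1
      ≤ 4 * (∑ k ∈ Ico 1 q, g k) ^ 2 := by
  rw [psk_variance_term_eq_norm_sq]
  calc _ ≤ (2 * ∑ k ∈ Ico 1 q, g k) ^ 2 :=
        pow_le_pow_left₀ (norm_nonneg _) (norm_sum_mul_exp_sub_one_le hg0 hg1) 2
    _ = 4 * (∑ k ∈ Ico 1 q, g k) ^ 2 := by ring

theorem psk_distance_term_ge {q : ℕ} {g : ℕ → ℝ} (hg0 : ∀ k < q, 0 ≤ g k)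
    (hg1 : ∑ k ∈ range q, g k = 1) :
    (1 - Real.cos (2 * π / q)) * ∑ k ∈ Ico 1 q, g k
      ≤ 1 - ∑ k ∈ range q, g k * Real.cos (2 * π * k / q) := by
  have hq : 0 < q := Nat.pos_of_ne_zero (by rintro rfl; simp at hg1)
  calc (1 - Real.cos (2 * π / q)) * ∑ k ∈ Ico 1 q, g k
      ≤ ∑ k ∈ Ico 1 q, g k * (1 - Real.cos (2 * π * k / q)) := by
        rw [mul_sum]
        refine sum_le_sum fun k hk => ?_
        obtain ⟨hk1, hkq⟩ := mem_Ico.mp hk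
        nlinarith [cos_two_pi_mul_div_le hk1 hkq, hg0 k hkq]
    _ = ∑ k ∈ range q, g k * (1 - Real.cos (2 * π * k / q)) := by
        rw [range_eq_Ico, sum_eq_sum_Ico_succ_bot hq]
        simp
    _ = 1 - ∑ k ∈ range q, g k * Real.cos (2 * π * k / q) := by
        simp only [mul_sub, mul_one, sum_sub_distrib, hg1]

theorem sum_mul_eq_sum_filter_of_zero_or_one {ι R : Type*} [Fintype ι] [Semiring R]
    [DecidableEq R] {a : ι → R} (ha : ∀ i, a i = 0 ∨ a i = 1) (v : ι → R) :
    ∑ i, a i * v i = ∑ i ∈ univ.filter (fun i => a i = 1), v i := by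
  rw [sum_filter]
  refine sum_congr rfl fun i _ => ?_
  split_ifs with h
  · rw [h, one_mul]
  · rw [(ha i).resolve_right h, zero_mul]

theorem sum_eq_card_filter_of_zero_or_one {ι R : Type*} [Fintype ι] [Semiring R]
    [DecidableEq R] {a : ι → R} (ha : ∀ i, a i = 0 ∨ a i = 1) :
    ∑ i, a i = (univ.filter (fun i => a i = 1)).card := by
  simpa using sum_mul_eq_sum_filter_of_zero_or_one ha 1

theorem two_mul_sum_sq_le_sq_sum {α : Type*} [DecidableEq α] {s : Finset α} {x : α → ℝ}
    (hx : ∀ i ∈ s, 0 ≤ x i) (hcheck : ∀ ℓ ∈ s, x ℓ ≤ ∑ i ∈ s.erase ℓ, x i) :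
    2 * ∑ ℓ ∈ s, x ℓ ^ 2 ≤ (∑ i ∈ s, x i) ^ 2 := by
  rw [sq, mul_sum, sum_mul]
  refine sum_le_sum fun ℓ hℓ => ?_
  have h2x : 2 * x ℓ ≤ ∑ i ∈ s, x i := by
    rw [← add_sum_erase s x hℓ]
    linarith [hcheck ℓ hℓ]
  nlinarith [hx ℓ hℓ]

theorem sum_sum_filter_eq_mul_sum {κ ι R : Type*} [Fintype κ] [Fintype ι] [Semiring R]
    [DecidableEq R] (H : Matrix κ ι R) {c : ℕ}
    (hcol : ∀ i, (univ.filter (fun j => H j i = 1)).card = c) (g : ι → R) :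
    ∑ j, ∑ i ∈ univ.filter (fun i => H j i = 1), g i = c * ∑ i, g i := by
  simp only [sum_filter]
  rw [sum_comm, mul_sum]
  refine sum_congr rfl fun i _ => ?_
  rw [← sum_filter, sum_const, hcol, nsmul_eq_mul]

theorem dotProduct_transpose_mul_self_mulVec {κ ι R : Type*} [Fintype κ] [Fintype ι]
    [CommSemiring R] (H : Matrix κ ι R) (v : ι → R) :
    v ⬝ᵥ ((Hᵀ * H) *ᵥ v) = (H *ᵥ v) ⬝ᵥ (H *ᵥ v) := by
  rw [← mulVec_mulVec, dotProduct_mulVec, vecMul_transpose]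

theorem transpose_mul_self_mulVec_one {κ ι R : Type*} [Fintype κ] [Fintype ι]
    [CommSemiring R] (H : Matrix κ ι R) {c d : R} (hrow : ∀ j, ∑ i, H j i = d)
    (hcol : ∀ i, ∑ j, H j i = c) :
    (Hᵀ * H) *ᵥ 1 = (c * d) • 1 := by
  have hH : H *ᵥ 1 = d • 1 := funext fun j => by simp [mulVec, dotProduct, hrow]
  have hHt : Hᵀ *ᵥ 1 = c • 1 := funext fun i => by simp [mulVec, dotProduct, hcol]
  rw [← mulVec_mulVec, hH, mulVec_smul, hHt, smul_smul, mul_comm]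

theorem dotProduct_mulVec_le_of_mulVec_one {ι : Type*} [Fintype ι] [Nonempty ι]
    {L : Matrix ι ι ℝ} (hL : Lᵀ = L) {μ lam : ℝ} (hone : L *ᵥ 1 = μ • 1)
    (hlam : ∀ v : ι → ℝ, ∑ i, v i = 0 → v ⬝ᵥ (L *ᵥ v) ≤ lam * ∑ i, v i ^ 2) (x : ι → ℝ) :
    x ⬝ᵥ (L *ᵥ x)
      ≤ lam * (∑ i, x i ^ 2 - (∑ i, x i) ^ 2 / Fintype.card ι)
        + μ * (∑ i, x i) ^ 2 / Fintype.card ι := by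
  have hN : (Fintype.card ι : ℝ) ≠ 0 := by simp
  set t := (∑ i, x i) / Fintype.card ι
  set y : ι → ℝ := x - t • 1
  have hy : ∑ i, y i = 0 := by
    simp [y, sum_sub_distrib, t, mul_div_cancel₀ _ hN]
  have hone_left : 1 ⬝ᵥ (L *ᵥ y) = 0 := by
    rw [dotProduct_mulVec, ← mulVec_transpose, hL, hone, smul_dotProduct, one_dotProduct, hy,
      smul_zero]
  have hsplit : x ⬝ᵥ (L *ᵥ x) = y ⬝ᵥ (L *ᵥ y) + μ * Fintype.card ι * t ^ 2 := by
    have hx : x = y + t • 1 := by simp [y]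
    rw [hx, mulVec_add, mulVec_smul, hone]
    simp only [add_dotProduct, dotProduct_add, smul_dotProduct, dotProduct_smul, hone_left,
      one_dotProduct_one, smul_eq_mul]
    rw [dotProduct_one, hy]
    ring
  have hy2 : ∑ i, y i ^ 2 = ∑ i, x i ^ 2 - (∑ i, x i) ^ 2 / Fintype.card ι := by
    simp only [y, t, Pi.sub_apply, Pi.smul_apply, Pi.one_apply, smul_eq_mul, mul_one, sub_sq,
      sum_add_distrib, sum_sub_distrib, ← sum_mul, ← mul_sum, sum_const, card_univ, nsmul_eq_mul]
    field_simp
    ring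
  have hrest : μ * Fintype.card ι * t ^ 2 = μ * (∑ i, x i) ^ 2 / Fintype.card ι := by
    simp only [t]
    field_simp
  rw [hsplit, hrest, ← hy2]
  linarith [hlam y hy]

theorem two_mul_sum_sq_le_of_checks {κ ι : Type*} [Fintype κ] [Fintype ι] [DecidableEq ι]
    (H : Matrix κ ι ℝ) (h01 : ∀ j i, H j i = 0 ∨ H j i = 1) {c : ℕ}
    (hcol : ∀ i, (univ.filter (fun j => H j i = 1)).card = c) {x : ι → ℝ} (hx : ∀ i, 0 ≤ x i)
    (hcheck : ∀ j, ∀ ℓ, H j ℓ = 1 → ∑ i ∈ (univ.filter (fun i => H j i = 1)).erase ℓ, x i ≥ x ℓ) :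
    2 * c * ∑ i, x i ^ 2 ≤ (H *ᵥ x) ⬝ᵥ (H *ᵥ x) := by
  have hrow : ∀ j, (H *ᵥ x) j = ∑ i ∈ univ.filter (fun i => H j i = 1), x i := fun j =>
    sum_mul_eq_sum_filter_of_zero_or_one (h01 j) x
  calc 2 * c * ∑ i, x i ^ 2
      = ∑ j, 2 * ∑ i ∈ univ.filter (fun i => H j i = 1), x i ^ 2 := by
        rw [← mul_sum, sum_sum_filter_eq_mul_sum H hcol]
        ring
    _ ≤ ∑ j, (∑ i ∈ univ.filter (fun i => H j i = 1), x i) ^ 2 :=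
        sum_le_sum fun j _ => two_mul_sum_sq_le_sq_sum (fun i _ => hx i)
          fun ℓ hℓ => hcheck j ℓ (mem_filter.mp hℓ).2
    _ = (H *ᵥ x) ⬝ᵥ (H *ᵥ x) := by simp only [dotProduct, hrow, sq]

theorem mul_sum_sq_le_mul_sq_sum_div_card {κ ι : Type*} [Fintype κ] [Fintype ι] [DecidableEq ι]
    [Nonempty ι] (H : Matrix κ ι ℝ) (h01 : ∀ j i, H j i = 0 ∨ H j i = 1) {c d : ℕ}
    (hcol : ∀ i, (univ.filter (fun j => H j i = 1)).card = c)
    (hrow : ∀ j, (univ.filter (fun i => H j i = 1)).card = d) {lam : ℝ}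
    (hlam : ∀ v : ι → ℝ, ∑ i, v i = 0 → v ⬝ᵥ ((Hᵀ * H) *ᵥ v) ≤ lam * ∑ i, v i ^ 2)
    {x : ι → ℝ} (hx : ∀ i, 0 ≤ x i)
    (hcheck : ∀ j, ∀ ℓ, H j ℓ = 1 → ∑ i ∈ (univ.filter (fun i => H j i = 1)).erase ℓ, x i ≥ x ℓ) :
    (2 * c - lam) * ∑ i, x i ^ 2 ≤ ((c : ℝ) * d - lam) * (∑ i, x i) ^ 2 / Fintype.card ι := by
  have hrowsum : ∀ j, ∑ i, H j i = d := fun j => by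
    rw [sum_eq_card_filter_of_zero_or_one (h01 j), hrow]
  have hcolsum : ∀ i, ∑ j, H j i = c := fun i => by
    rw [sum_eq_card_filter_of_zero_or_one (fun j => h01 j i), hcol]
  have hlower := two_mul_sum_sq_le_of_checks H h01 hcol hx hcheck
  have hupper := dotProduct_mulVec_le_of_mulVec_one (by rw [transpose_mul, transpose_transpose])
    (transpose_mul_self_mulVec_one H hrowsum hcolsum) hlam x
  rw [dotProduct_transpose_mul_self_mulVec] at hupper
  rw [mul_div_assoc] at hupper ⊢
  linarith

theorem min_pseudodistance_eigenvalue_bound_general {q m n : ℕ} (c d : ℕ)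
    (Hs : Matrix (Fin m) (Fin n) ℝ)
    (h01 : ∀ j i, Hs j i = 0 ∨ Hs j i = 1)
    (hcol : ∀ i, (univ.filter (fun j => Hs j i = 1)).card = c)
    (hrow : ∀ j, (univ.filter (fun i => Hs j i = 1)).card = d)
    (lam2 : ℝ) (hlam2 : lam2 < (c : ℝ) * d)
    (h2 : ∀ v : Fin n → ℝ, ∑ i, v i = 0 →
      v ⬝ᵥ ((Hsᵀ * Hs) *ᵥ v) ≤ lam2 * ∑ i, (v i) ^ 2)
    (f : Fin n → ℕ → ℝ)
    (hf0 : ∀ i, ∀ k < q, 0 ≤ f i k)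
    (hf1 : ∀ i, ∑ k ∈ Finset.range q, f i k = 1)
    (x : Fin n → ℝ)
    (hx : ∀ i, x i = ∑ k ∈ Finset.Ico 1 q, f i k)
    (hcheck : ∀ j, ∀ ℓ, Hs j ℓ = 1 →
      ∑ i ∈ (univ.filter (fun i => Hs j i = 1)).erase ℓ, x i ≥ x ℓ)
    (S V : ℝ)
    (hS : S = 2 * ∑ i, (1 - ∑ k ∈ Finset.range q, f i k * Real.cos (2 * π * k / q)))
    (hV : V = ∑ i, (∑ k ∈ Finset.range q, (f i k) ^ 2
        + 2 * ∑ l ∈ Finset.range q, ∑ k ∈ Finset.range l,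
            f i k * f i l * Real.cos (2 * π * ((k : ℝ) - l) / q)
        - 2 * ∑ k ∈ Finset.range q, f i k * Real.cos (2 * π * k / q) + 1))
    (hVpos : 0 < V) :
    S ^ 2 / V ≥ (1 - Real.cos (2 * π / q)) ^ 2
        * (n * (2 * c - lam2) / ((c : ℝ) * d - lam2)) := by
  set γ := 1 - Real.cos (2 * π / q)
  have hxnn : ∀ i, 0 ≤ x i := fun i => by
    rw [hx i]
    exact sum_nonneg fun k hk => hf0 i k (mem_Ico.mp hk).2
  have hSX : 2 * γ * ∑ i, x i ≤ S := by
    rw [hS, mul_assoc, mul_sum]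
    gcongr with i
    rw [hx i]
    exact psk_distance_term_ge (hf0 i) (hf1 i)
  have hVX : V ≤ 4 * ∑ i, x i ^ 2 := by
    rw [hV, mul_sum]
    gcongr with i
    rw [hx i]
    exact psk_variance_term_le (hf0 i) (hf1 i)
  have hX2 : 0 < ∑ i, x i ^ 2 := by linarith
  have hn : 0 < n := Nat.pos_of_ne_zero (by rintro rfl; simp at hX2)
  have : Nonempty (Fin n) := Fin.pos_iff_nonempty.mp hn
  have hgraph := mul_sum_sq_le_mul_sq_sum_div_card Hs h01 hcol hrow h2 hxnn hcheck
  rw [Fintype.card_fin] at hgraph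
  have hratio : n * (2 * c - lam2) / ((c : ℝ) * d - lam2) ≤ (∑ i, x i) ^ 2 / ∑ i, x i ^ 2 := by
    rw [div_le_div_iff₀ (by linarith) hX2]
    rw [le_div_iff₀ (Nat.cast_pos.mpr hn)] at hgraph
    linarith
  have hγ : 0 ≤ γ := sub_nonneg.mpr (Real.cos_le_one _)
  calc γ ^ 2 * (n * (2 * c - lam2) / ((c : ℝ) * d - lam2))
      ≤ γ ^ 2 * ((∑ i, x i) ^ 2 / ∑ i, x i ^ 2) := by gcongr
    _ = (2 * γ * ∑ i, x i) ^ 2 / (4 * ∑ i, x i ^ 2) := by field_simp; ring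
    _ ≤ S ^ 2 / V := div_le_div₀ (sq_nonneg S) (pow_le_pow_left₀
      (mul_nonneg (mul_nonneg zero_le_two hγ) (sum_nonneg fun i _ => hxnn i)) hSX 2) hVpos hVX

/-- Main eigenvalue bound for `q`-ary PSK over AWGN: with `Hs` the 0–1 support matrix
of a `(c,d)`-regular parity-check matrix, `L = Hsᵀ Hs`, `λ₁ = cd`, and `λ₂ < λ₁` an
upper bound for the Rayleigh quotient of `L` on vectors orthogonal to the all-ones
vector, any normalized pseudocodeword matrix `(f i k)` (rows nonnegative, summing to 1,
satisfying the per-check inequalities on `x_i = ∑_{1 ≤ k < q} f i k`) with `V > 0` has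
squared pseudodistance `S²/V ≥ (1 − cos(2π/q))² n (2c − λ₂)/(λ₁ − λ₂)`. -/
theorem min_pseudodistance_eigenvalue_bound {q m n : ℕ} (hq : 2 ≤ q) (c d : ℕ)
    (Hs : Matrix (Fin m) (Fin n) ℝ)
    (h01 : ∀ j i, Hs j i = 0 ∨ Hs j i = 1)
    (hcol : ∀ i, (univ.filter (fun j => Hs j i = 1)).card = c)
    (hrow : ∀ j, (univ.filter (fun i => Hs j i = 1)).card = d)
    (lam2 : ℝ) (hlam2 : lam2 < (c : ℝ) * d)
    (h2 : ∀ v : Fin n → ℝ, ∑ i, v i = 0 →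
      v ⬝ᵥ ((Hsᵀ * Hs) *ᵥ v) ≤ lam2 * ∑ i, (v i) ^ 2)
    (f : Fin n → ℕ → ℝ)
    (hf0 : ∀ i, ∀ k < q, 0 ≤ f i k)
    (hf1 : ∀ i, ∑ k ∈ Finset.range q, f i k = 1)
    (x : Fin n → ℝ)
    (hx : ∀ i, x i = ∑ k ∈ Finset.Ico 1 q, f i k)
    (hcheck : ∀ j, ∀ ℓ, Hs j ℓ = 1 →
      ∑ i ∈ (univ.filter (fun i => Hs j i = 1)).erase ℓ, x i ≥ x ℓ)
    (S V : ℝ)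
    (hS : S = 2 * ∑ i, (1 - ∑ k ∈ Finset.range q, f i k * Real.cos (2 * π * k / q)))
    (hV : V = ∑ i, (∑ k ∈ Finset.range q, (f i k) ^ 2
        + 2 * ∑ l ∈ Finset.range q, ∑ k ∈ Finset.range l,
            f i k * f i l * Real.cos (2 * π * ((k : ℝ) - l) / q)
        - 2 * ∑ k ∈ Finset.range q, f i k * Real.cos (2 * π * k / q) + 1))
    (hVpos : 0 < V) :
    S ^ 2 / V ≥ (1 - Real.cos (2 * π / q)) ^ 2
        * (n * (2 * c - lam2) / ((c : ℝ) * d - lam2)) :=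
  min_pseudodistance_eigenvalue_bound_general c d Hs h01 hcol hrow lam2 hlam2 h2 f hf0 hf1 x hx
    hcheck S V hS hV hVpos
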